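/- arXiv:1904.11261 — 3 statements merged into one kernel-verified Lean document; each statement's English description precedes it below -/
import Mathlib

section
/- Let f : ℝ → ℝ be twice continuously differentiable with |f(x)| ≤ M₀ for all x and |f''(x)| ≤ M₂ for all x. Then for all x, |f'(x)| ≤ 2√(M₀ M₂). -/
/-! Expanding `f` to first order at `x + h` and `x - h`, with remainders bounded by `M₂ h²` since
`f'` is `M₂`-Lipschitz, gives `2h |f'(x)| ≤ 2M₀ + 2M₂h²` for every `h > 0`; the choice
`h = √(M₀ / M₂)` then yields `|f'(x)| ≤ 2√(M₀M₂)`. -/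

open Filter Topology Set

section Interpolation

variable {E : Type*} [NormedAddCommGroup E] [NormedSpace ℝ E] {f : ℝ → E} {M M₀ : ℝ}

theorem norm_add_sub_sub_smul_deriv_le (hf : Differentiable ℝ f)
    (hf' : ∀ y z, ‖deriv f y - deriv f z‖ ≤ M * |y - z|) (x h : ℝ) :
    ‖f (x + h) - f x - h • deriv f x‖ ≤ M * h ^ 2 := by
  have hM : 0 ≤ M := by simpa using (norm_nonneg _).trans (hf' 1 0)
  have hderiv : ∀ t ∈ uIcc x (x + h),
      HasDerivWithinAt (fun t ↦ f t - (t - x) • deriv f x) (deriv f t - deriv f x)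
        (uIcc x (x + h)) t :=
    fun t _ ↦ ((hf t).hasDerivAt.sub (((hasDerivAt_id t).sub_const x).smul_const
      (deriv f x) |>.congr_deriv (one_smul ℝ _))).hasDerivWithinAt
  have hbound : ∀ t ∈ uIcc x (x + h), ‖deriv f t - deriv f x‖ ≤ M * |x + h - x| := fun t ht ↦
    (hf' t x).trans (mul_le_mul_of_nonneg_left
      (abs_sub_le_of_uIcc_subset_uIcc (uIcc_subset_uIcc_left ht)) hM)
  have := (convex_uIcc x (x + h)).norm_image_sub_le_of_norm_hasDerivWithin_le hderiv hbound
    left_mem_uIcc right_mem_uIcc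
  simpa [Real.norm_eq_abs, sq, mul_assoc, sub_right_comm] using this

theorem norm_deriv_le_div_add_mul (hf : Differentiable ℝ f) (hf₀ : ∀ y, ‖f y‖ ≤ M₀)
    (hf' : ∀ y z, ‖deriv f y - deriv f z‖ ≤ M * |y - z|) (x : ℝ) {h : ℝ} (hh : 0 < h) :
    ‖deriv f x‖ ≤ M₀ / h + M * h := by
  set remRight := f (x + h) - f x - h • deriv f x
  set remLeft := f (x + -h) - f x - (-h) • deriv f x
  have hRight : ‖remRight‖ ≤ M * h ^ 2 := norm_add_sub_sub_smul_deriv_le hf hf' x h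
  have hLeft : ‖remLeft‖ ≤ M * h ^ 2 := by
    simpa only [neg_sq] using norm_add_sub_sub_smul_deriv_le hf hf' x (-h)
  have hsymm : (2 * h) • deriv f x = f (x + h) - f (x + -h) - remRight + remLeft := by
    simp only [remRight, remLeft]
    module
  have : 2 * h * ‖deriv f x‖ ≤ 2 * M₀ + 2 * M * h ^ 2 := by
    calc 2 * h * ‖deriv f x‖ = ‖f (x + h) - f (x + -h) - remRight + remLeft‖ := by
          rw [← hsymm, norm_smul, Real.norm_of_nonneg (by positivity)]
      _ ≤ ‖f (x + h)‖ + ‖f (x + -h)‖ + ‖remRight‖ + ‖remLeft‖ := by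
          have := norm_add_le (f (x + h) - f (x + -h) - remRight) remLeft
          have := norm_sub_le (f (x + h) - f (x + -h)) remRight
          have := norm_sub_le (f (x + h)) (f (x + -h))
          linarith
      _ ≤ 2 * M₀ + 2 * M * h ^ 2 := by linarith [hf₀ (x + h), hf₀ (x + -h)]
  rw [div_add' _ _ _ hh.ne', le_div_iff₀ hh]
  nlinarith

end Interpolation

theorem le_two_mul_sqrt_mul_of_forall_le_div_add_mul_of_pos {a A B : ℝ} (hA : 0 < A) (hB : 0 < B)
    (h : ∀ t > 0, a ≤ A / t + B * t) : a ≤ 2 * √(A * B) := by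
  have key : A / (√A / √B) + B * (√A / √B) = 2 * √(A * B) := by
    rw [Real.sqrt_mul hA.le]
    field_simp
    rw [Real.sq_sqrt hA.le, Real.sq_sqrt hB.le]
    ring
  exact key ▸ h _ (by positivity)

theorem le_two_mul_sqrt_mul_of_forall_le_div_add_mul {a A B : ℝ} (hA : 0 ≤ A) (hB : 0 ≤ B)
    (h : ∀ t > 0, a ≤ A / t + B * t) : a ≤ 2 * √(A * B) := by
  -- The optimal `t = √(A / B)` needs `A, B > 0`: perturb both by `ε` and let `ε → 0`.
  have hlim : Tendsto (fun ε ↦ 2 * √((A + ε) * (B + ε))) (𝓝[>] 0) (𝓝 (2 * √(A * B))) := by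
    have hcont : Continuous (fun ε ↦ 2 * √((A + ε) * (B + ε))) := by fun_prop
    simpa using (hcont.tendsto 0).mono_left nhdsWithin_le_nhds
  refine ge_of_tendsto hlim (eventually_nhdsWithin_of_forall fun ε (hε : 0 < ε) ↦ ?_)
  refine le_two_mul_sqrt_mul_of_forall_le_div_add_mul_of_pos (by positivity) (by positivity)
    fun t ht ↦ (h t ht).trans ?_
  gcongr <;> linarith

/-- Landau's interpolation inequality on the real line: if `f` is `C²` with
`|f| ≤ M₀` and `|f''| ≤ M₂` everywhere, then `|f'(x)| ≤ 2√(M₀ M₂)` for every `x`. -/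
theorem landau_inequality (f : ℝ → ℝ) (M₀ M₂ : ℝ)
    (hf : ContDiff ℝ 2 f)
    (h0 : ∀ x, |f x| ≤ M₀)
    (h2 : ∀ x, |iteratedDeriv 2 f x| ≤ M₂) :
    ∀ x, |deriv f x| ≤ 2 * Real.sqrt (M₀ * M₂) := by
  intro x
  have hM₀ : 0 ≤ M₀ := (abs_nonneg _).trans (h0 0)
  have hM₂ : 0 ≤ M₂ := (abs_nonneg _).trans (h2 0)
  have hf' : Differentiable ℝ (deriv f) := by
    simpa using hf.differentiable_iteratedDeriv 1 (by norm_num)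
  have hlip : ∀ y z, ‖deriv f y - deriv f z‖ ≤ M₂ * |y - z| := fun y z ↦ by
    simpa using convex_univ.norm_image_sub_le_of_norm_deriv_le
      (fun t _ ↦ hf' t) (fun t _ ↦ by simpa [iteratedDeriv_succ] using h2 t)
      (mem_univ z) (mem_univ y)
  simpa using le_two_mul_sqrt_mul_of_forall_le_div_add_mul hM₀ hM₂ fun t ht ↦
    norm_deriv_le_div_add_mul (hf.differentiable two_ne_zero) (by simpa using h0) hlip x ht
end

section
/- Let X = B × Y with product metrics ĝ(t) = g₁ ⊕ e^{-t} g_Y and g̃(t) = g₂ ⊕ e^{-t} g_Y for t ∈ [0,∞), where g₁, g₂ are fixed metrics on B and g_Y a fixed metric on Y. Then the difference of Christoffel symbols (a tensor) Γ(ĝ(t)) − Γ(g̃(t)) equals the pullback to X of Γ(g₁) − Γ(g₂) from B, and in particular its g̃(t)-norm is bounded uniformly in t. -/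
open scoped BigOperators

section

variable {m k : ℕ}

/-- Coordinate direction on `B × Y = ℝᵐ × ℝᵏ` indexed by `Fin m ⊕ Fin k`. -/
noncomputable def dirTot (i : Fin m ⊕ Fin k) : (Fin m → ℝ) × (Fin k → ℝ) :=
  match i with
  | Sum.inl a => (Pi.single a 1, 0)
  | Sum.inr b => (0, Pi.single b 1)

/-- Partial derivative on `B × Y`. -/
noncomputable def pdTot (i : Fin m ⊕ Fin k)
    (F : (Fin m → ℝ) × (Fin k → ℝ) → ℝ) (p : (Fin m → ℝ) × (Fin k → ℝ)) : ℝ :=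
  fderiv ℝ F p (dirTot i)

/-- Partial derivative on the base `B = ℝᵐ`. -/
noncomputable def pdB (a : Fin m) (F : (Fin m → ℝ) → ℝ) (z : Fin m → ℝ) : ℝ :=
  fderiv ℝ F z (Pi.single a 1)

/-- Christoffel symbols `Γ^c_{ij} = ½ gᶜˡ(∂ᵢ g_{jl} + ∂ⱼ g_{il} − ∂_l g_{ij})` of a
metric on `B × Y` given in coordinates as a matrix-valued function. -/
noncomputable def christoffelTot
    (g : (Fin m → ℝ) × (Fin k → ℝ) → Matrix (Fin m ⊕ Fin k) (Fin m ⊕ Fin k) ℝ)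
    (c i j : Fin m ⊕ Fin k) (p : (Fin m → ℝ) × (Fin k → ℝ)) : ℝ :=
  (1 / 2) * ∑ l : Fin m ⊕ Fin k, (g p)⁻¹ c l *
    (pdTot i (fun q => g q j l) p + pdTot j (fun q => g q i l) p
      - pdTot l (fun q => g q i j) p)

/-- Christoffel symbols of a metric on the base `B = ℝᵐ`. -/
noncomputable def christoffelB
    (g : (Fin m → ℝ) → Matrix (Fin m) (Fin m) ℝ)
    (c i j : Fin m) (z : Fin m → ℝ) : ℝ :=
  (1 / 2) * ∑ l : Fin m, (g z)⁻¹ c l *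
    (pdB i (fun q => g q j l) z + pdB j (fun q => g q i l) z
      - pdB l (fun q => g q i j) z)


section AuxChrist

variable {m k : ℕ}

lemma pdTot_const (i : Fin m ⊕ Fin k) (c : ℝ) (p : (Fin m → ℝ) × (Fin k → ℝ)) :
    pdTot i (fun _ => c) p = 0 := by
  simp [pdTot]

lemma fderiv_comp_fst' (F : (Fin m → ℝ) → ℝ) (p : (Fin m → ℝ) × (Fin k → ℝ))
    (hF : DifferentiableAt ℝ F p.1) (v : (Fin m → ℝ) × (Fin k → ℝ)) :
    fderiv ℝ (fun q : (Fin m → ℝ) × (Fin k → ℝ) => F q.1) p v = fderiv ℝ F p.1 v.1 := by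
  rw [show (fun q : (Fin m → ℝ) × (Fin k → ℝ) => F q.1) = F ∘ Prod.fst from rfl,
    fderiv_comp p hF differentiableAt_fst, fderiv_fst]
  rfl

lemma fderiv_comp_snd' (G : (Fin k → ℝ) → ℝ) (p : (Fin m → ℝ) × (Fin k → ℝ))
    (hG : DifferentiableAt ℝ G p.2) (v : (Fin m → ℝ) × (Fin k → ℝ)) :
    fderiv ℝ (fun q : (Fin m → ℝ) × (Fin k → ℝ) => G q.2) p v = fderiv ℝ G p.2 v.2 := by
  rw [show (fun q : (Fin m → ℝ) × (Fin k → ℝ) => G q.2) = G ∘ Prod.snd from rfl,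
    fderiv_comp p hG differentiableAt_snd, fderiv_snd]
  rfl

lemma pdTot_fst_inl (F : (Fin m → ℝ) → ℝ) (p : (Fin m → ℝ) × (Fin k → ℝ))
    (hF : DifferentiableAt ℝ F p.1) (a : Fin m) :
    pdTot (Sum.inl a) (fun q : (Fin m → ℝ) × (Fin k → ℝ) => F q.1) p = pdB a F p.1 := by
  rw [pdTot, fderiv_comp_fst' F p hF]
  rfl

lemma pdTot_fst_inr (F : (Fin m → ℝ) → ℝ) (p : (Fin m → ℝ) × (Fin k → ℝ))
    (hF : DifferentiableAt ℝ F p.1) (b : Fin k) :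
    pdTot (Sum.inr b) (fun q : (Fin m → ℝ) × (Fin k → ℝ) => F q.1) p = 0 := by
  rw [pdTot, fderiv_comp_fst' F p hF]
  show fderiv ℝ F p.1 0 = 0
  simp

lemma pdTot_snd_inl (G : (Fin k → ℝ) → ℝ) (p : (Fin m → ℝ) × (Fin k → ℝ))
    (hG : DifferentiableAt ℝ G p.2) (a : Fin m) :
    pdTot (Sum.inl a) (fun q : (Fin m → ℝ) × (Fin k → ℝ) => G q.2) p = 0 := by
  rw [pdTot, fderiv_comp_snd' G p hG]
  show fderiv ℝ G p.2 0 = 0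
  simp

lemma isUnit_exp_smul {t : ℝ} {M : Matrix (Fin k) (Fin k) ℝ} (hM : M.PosDef) :
    IsUnit (Real.exp (-t) • M) := by
  rw [Matrix.isUnit_iff_isUnit_det, Matrix.det_smul, isUnit_iff_ne_zero]
  exact (mul_pos (pow_pos (Real.exp_pos _) _) hM.det_pos).ne'

lemma inv_block {A : Matrix (Fin m) (Fin m) ℝ} {D : Matrix (Fin k) (Fin k) ℝ}
    (hA : IsUnit A) (hD : IsUnit D) :
    (Matrix.fromBlocks A 0 0 D)⁻¹ = Matrix.fromBlocks A⁻¹ 0 0 D⁻¹ := by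
  rw [Matrix.inv_fromBlocks_zero₂₁_of_isUnit_iff A 0 D (iff_of_true hA hD)]
  simp

/-- The purely fiberwise Christoffel expression, independent of the base metric. -/
noncomputable def fibChrist (gY : (Fin k → ℝ) → Matrix (Fin k) (Fin k) ℝ) (t : ℝ)
    (c i j : Fin m ⊕ Fin k) (p : (Fin m → ℝ) × (Fin k → ℝ)) : ℝ :=
  match c, i, j with
  | Sum.inr c, Sum.inr a, Sum.inr b =>
      (1 / 2) * ∑ l : Fin k, (Real.exp (-t) • gY p.2)⁻¹ c l *
        (pdTot (Sum.inr a) (fun q => Real.exp (-t) * gY q.2 b l) p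
          + pdTot (Sum.inr b) (fun q => Real.exp (-t) * gY q.2 a l) p
          - pdTot (Sum.inr l) (fun q => Real.exp (-t) * gY q.2 a b) p)
  | _, _, _ => 0

lemma christoffelTot_block_inl
    (gB : (Fin m → ℝ) → Matrix (Fin m) (Fin m) ℝ)
    (gY : (Fin k → ℝ) → Matrix (Fin k) (Fin k) ℝ)
    (hgB : ∀ a b, Differentiable ℝ fun z => gB z a b)
    (hpos : ∀ z, IsUnit (gB z)) (hYpos : ∀ y, (gY y).PosDef) (t : ℝ)
    (p : (Fin m → ℝ) × (Fin k → ℝ)) (c a b : Fin m) :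
    christoffelTot (fun q => Matrix.fromBlocks (gB q.1) 0 0 (Real.exp (-t) • gY q.2))
      (Sum.inl c) (Sum.inl a) (Sum.inl b) p = christoffelB gB c a b p.1 := by
  have hinv : (Matrix.fromBlocks (gB p.1) 0 0 (Real.exp (-t) • gY p.2))⁻¹
      = Matrix.fromBlocks (gB p.1)⁻¹ 0 0 (Real.exp (-t) • gY p.2)⁻¹ :=
    inv_block (hpos p.1) (isUnit_exp_smul (hYpos p.2))
  simp only [christoffelTot, christoffelB, hinv, Fintype.sum_sum_type,
    Matrix.fromBlocks_apply₁₁, Matrix.fromBlocks_apply₁₂, Matrix.zero_apply,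
    zero_mul, Finset.sum_const_zero, add_zero]
  congr 1
  refine Finset.sum_congr rfl fun l _ => ?_
  rw [show pdTot (Sum.inl a) (fun q : (Fin m → ℝ) × (Fin k → ℝ) => gB q.1 b l) p
      = pdB a (fun z => gB z b l) p.1 from pdTot_fst_inl _ p ((hgB b l) p.1) a,
    show pdTot (Sum.inl b) (fun q : (Fin m → ℝ) × (Fin k → ℝ) => gB q.1 a l) p
      = pdB b (fun z => gB z a l) p.1 from pdTot_fst_inl _ p ((hgB a l) p.1) b,
    show pdTot (Sum.inl l) (fun q : (Fin m → ℝ) × (Fin k → ℝ) => gB q.1 a b) p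
      = pdB l (fun z => gB z a b) p.1 from pdTot_fst_inl _ p ((hgB a b) p.1) l]

lemma christoffelTot_block_notleft
    (gB : (Fin m → ℝ) → Matrix (Fin m) (Fin m) ℝ)
    (gY : (Fin k → ℝ) → Matrix (Fin k) (Fin k) ℝ)
    (hgB : ∀ a b, Differentiable ℝ fun z => gB z a b)
    (hgY : ∀ a b, Differentiable ℝ fun y => gY y a b)
    (hpos : ∀ z, IsUnit (gB z)) (hYpos : ∀ y, (gY y).PosDef) (t : ℝ)
    (p : (Fin m → ℝ) × (Fin k → ℝ)) (c i j : Fin m ⊕ Fin k)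
    (h : ¬ (c.isLeft = true ∧ i.isLeft = true ∧ j.isLeft = true)) :
    christoffelTot (fun q => Matrix.fromBlocks (gB q.1) 0 0 (Real.exp (-t) • gY q.2))
      c i j p = fibChrist gY t c i j p := by
  have hinv : (Matrix.fromBlocks (gB p.1) 0 0 (Real.exp (-t) • gY p.2))⁻¹
      = Matrix.fromBlocks (gB p.1)⁻¹ 0 0 (Real.exp (-t) • gY p.2)⁻¹ :=
    inv_block (hpos p.1) (isUnit_exp_smul (hYpos p.2))
  have hb0 : ∀ (x y : Fin m) (b : Fin k),
      pdTot (Sum.inr b) (fun q : (Fin m → ℝ) × (Fin k → ℝ) => gB q.1 x y) p = 0 :=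
    fun x y b => pdTot_fst_inr _ p ((hgB x y) p.1) b
  have hf0 : ∀ (x y : Fin k) (a : Fin m),
      pdTot (Sum.inl a) (fun q : (Fin m → ℝ) × (Fin k → ℝ) => Real.exp (-t) * gY q.2 x y) p
        = 0 :=
    fun x y a => pdTot_snd_inl _ p (((hgY x y).const_mul (Real.exp (-t))) p.2) a
  rcases c with c | c <;> rcases i with a | a <;> rcases j with b | b <;>
    simp only [Sum.isLeft_inl, Sum.isLeft_inr, and_true, and_false, false_and,
      not_true_eq_false, not_false_eq_true] at h ⊢ <;>
    simp only [christoffelTot, fibChrist, hinv, Fintype.sum_sum_type,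
      Matrix.fromBlocks_apply₁₁, Matrix.fromBlocks_apply₁₂, Matrix.fromBlocks_apply₂₁,
      Matrix.fromBlocks_apply₂₂, Matrix.zero_apply, Matrix.smul_apply, smul_eq_mul,
      pdTot_const, hb0, hf0, zero_mul, mul_zero, add_zero, zero_add, zero_sub, sub_zero,
      neg_zero, sub_self, Finset.sum_const_zero]

end AuxChrist

/-- For the product metrics `ĝ(t) = g₁ ⊕ e^{-t} g_Y` and `g̃(t) = g₂ ⊕ e^{-t} g_Y` on
`X = B × Y`, the difference of Christoffel symbols `Γ(ĝ(t)) − Γ(g̃(t))` equals the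
pullback to `X` of `Γ(g₁) − Γ(g₂)` from `B` (in particular it vanishes unless all
indices are base indices), and in particular it is bounded at each point uniformly
in `t`. -/
theorem christoffel_difference_product_metrics
    (g1 g2 : (Fin m → ℝ) → Matrix (Fin m) (Fin m) ℝ)
    (gY : (Fin k → ℝ) → Matrix (Fin k) (Fin k) ℝ)
    (hg1 : ∀ a b, ContDiff ℝ (⊤ : ℕ∞) fun z => g1 z a b)
    (hg2 : ∀ a b, ContDiff ℝ (⊤ : ℕ∞) fun z => g2 z a b)
    (hgY : ∀ a b, ContDiff ℝ (⊤ : ℕ∞) fun y => gY y a b)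
    (hg1pos : ∀ z, (g1 z).PosDef)
    (hg2pos : ∀ z, (g2 z).PosDef)
    (hgYpos : ∀ y, (gY y).PosDef) :
    (∀ (t : ℝ) (c a b : Fin m) (p : (Fin m → ℝ) × (Fin k → ℝ)),
      christoffelTot
          (fun q => Matrix.fromBlocks (g1 q.1) 0 0 (Real.exp (-t) • gY q.2))
          (Sum.inl c) (Sum.inl a) (Sum.inl b) p
        - christoffelTot
          (fun q => Matrix.fromBlocks (g2 q.1) 0 0 (Real.exp (-t) • gY q.2))
          (Sum.inl c) (Sum.inl a) (Sum.inl b) p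
      = christoffelB g1 c a b p.1 - christoffelB g2 c a b p.1) ∧
    (∀ (t : ℝ) (l i j : Fin m ⊕ Fin k) (p : (Fin m → ℝ) × (Fin k → ℝ)),
      ¬ (l.isLeft = true ∧ i.isLeft = true ∧ j.isLeft = true) →
      christoffelTot
          (fun q => Matrix.fromBlocks (g1 q.1) 0 0 (Real.exp (-t) • gY q.2))
          l i j p
        - christoffelTot
          (fun q => Matrix.fromBlocks (g2 q.1) 0 0 (Real.exp (-t) • gY q.2))
          l i j p = 0) ∧
    (∀ p : (Fin m → ℝ) × (Fin k → ℝ), ∃ C : ℝ,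
      ∀ (t : ℝ) (l i j : Fin m ⊕ Fin k),
        |christoffelTot
            (fun q => Matrix.fromBlocks (g1 q.1) 0 0 (Real.exp (-t) • gY q.2))
            l i j p
          - christoffelTot
            (fun q => Matrix.fromBlocks (g2 q.1) 0 0 (Real.exp (-t) • gY q.2))
            l i j p| ≤ C) := by
  have hg1d : ∀ a b, Differentiable ℝ fun z => g1 z a b :=
    fun a b => (hg1 a b).differentiable (by simp)
  have hg2d : ∀ a b, Differentiable ℝ fun z => g2 z a b :=
    fun a b => (hg2 a b).differentiable (by simp)
  have hgYd : ∀ a b, Differentiable ℝ fun y => gY y a b :=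
    fun a b => (hgY a b).differentiable (by simp)
  have hu1 : ∀ z, IsUnit (g1 z) := fun z => (hg1pos z).isUnit
  have hu2 : ∀ z, IsUnit (g2 z) := fun z => (hg2pos z).isUnit
  have main1 : ∀ (t : ℝ) (c a b : Fin m) (p : (Fin m → ℝ) × (Fin k → ℝ)),
      christoffelTot
          (fun q => Matrix.fromBlocks (g1 q.1) 0 0 (Real.exp (-t) • gY q.2))
          (Sum.inl c) (Sum.inl a) (Sum.inl b) p
        - christoffelTot
          (fun q => Matrix.fromBlocks (g2 q.1) 0 0 (Real.exp (-t) • gY q.2))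
          (Sum.inl c) (Sum.inl a) (Sum.inl b) p
      = christoffelB g1 c a b p.1 - christoffelB g2 c a b p.1 := by
    intro t c a b p
    rw [christoffelTot_block_inl g1 gY hg1d hu1 hgYpos t p c a b,
      christoffelTot_block_inl g2 gY hg2d hu2 hgYpos t p c a b]
  have main2 : ∀ (t : ℝ) (l i j : Fin m ⊕ Fin k) (p : (Fin m → ℝ) × (Fin k → ℝ)),
      ¬ (l.isLeft = true ∧ i.isLeft = true ∧ j.isLeft = true) →
      christoffelTot
          (fun q => Matrix.fromBlocks (g1 q.1) 0 0 (Real.exp (-t) • gY q.2)) l i j p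
        - christoffelTot
          (fun q => Matrix.fromBlocks (g2 q.1) 0 0 (Real.exp (-t) • gY q.2)) l i j p
        = 0 := by
    intro t l i j p h
    rw [christoffelTot_block_notleft g1 gY hg1d hgYd hu1 hgYpos t p l i j h,
      christoffelTot_block_notleft g2 gY hg2d hgYd hu2 hgYpos t p l i j h, sub_self]
  refine ⟨main1, main2, ?_⟩
  intro p
  refine ⟨∑ c : Fin m, ∑ a : Fin m, ∑ b : Fin m,
    |christoffelB g1 c a b p.1 - christoffelB g2 c a b p.1|, ?_⟩
  intro t l i j
  by_cases h : l.isLeft = true ∧ i.isLeft = true ∧ j.isLeft = true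
  · obtain ⟨hl, hi, hj⟩ := h
    obtain ⟨c, rfl⟩ := Sum.isLeft_iff.mp hl
    obtain ⟨a, rfl⟩ := Sum.isLeft_iff.mp hi
    obtain ⟨b, rfl⟩ := Sum.isLeft_iff.mp hj
    rw [main1 t c a b p]
    calc |christoffelB g1 c a b p.1 - christoffelB g2 c a b p.1|
        ≤ ∑ b' : Fin m, |christoffelB g1 c a b' p.1 - christoffelB g2 c a b' p.1| :=
          Finset.single_le_sum
            (f := fun b' => |christoffelB g1 c a b' p.1 - christoffelB g2 c a b' p.1|)
            (fun _ _ => abs_nonneg _) (Finset.mem_univ b)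
      _ ≤ ∑ a' : Fin m, ∑ b' : Fin m,
            |christoffelB g1 c a' b' p.1 - christoffelB g2 c a' b' p.1| :=
          Finset.single_le_sum
            (f := fun a' => ∑ b' : Fin m,
              |christoffelB g1 c a' b' p.1 - christoffelB g2 c a' b' p.1|)
            (fun _ _ => Finset.sum_nonneg fun _ _ => abs_nonneg _) (Finset.mem_univ a)
      _ ≤ ∑ c' : Fin m, ∑ a' : Fin m, ∑ b' : Fin m,
            |christoffelB g1 c' a' b' p.1 - christoffelB g2 c' a' b' p.1| :=
          Finset.single_le_sum
            (f := fun c' => ∑ a' : Fin m, ∑ b' : Fin m,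
              |christoffelB g1 c' a' b' p.1 - christoffelB g2 c' a' b' p.1|)
            (fun _ _ => Finset.sum_nonneg fun _ _ =>
              Finset.sum_nonneg fun _ _ => abs_nonneg _) (Finset.mem_univ c)
  · rw [main2 t l i j p h, abs_zero]
    exact Finset.sum_nonneg fun _ _ => Finset.sum_nonneg fun _ _ =>
      Finset.sum_nonneg fun _ _ => abs_nonneg _


end
end

section
/- Let U ⊆ ℝⁿ be open and bounded, ρ ∈ C_c^∞(U) with 0 ≤ ρ ≤ 1 and |∇ρ|² + |Δρ| ≤ B on U. Let u, w : closure(U) → ℝ be continuous, C² on U, with 0 ≤ w ≤ 1, −Δu ≤ −2G + 1 and −Δ(ρ²v) ≤ C·G on U, where v = w², G ≥ 0 continuous, and C a constant. If Q = ρ²v + C·u attains its maximum over closure(U) at x₀, then either ρ(x₀) = 0 and Q ≤ C·u(x₀) ≤ C, or x₀ ∈ U and G(x₀) ≤ C, whence Q ≤ Q(x₀) ≤ v(x₀) + C·u(x₀). -/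
open scoped BigOperators


private lemma second_deriv_nonpos {g g' : ℝ → ℝ} {c : ℝ}
    (h1 : ∀ᶠ t in nhds (0:ℝ), HasDerivAt g (g' t) t)
    (h2 : HasDerivAt g' c 0)
    (hmax : IsLocalMax g 0) : c ≤ 0 := by
  by_contra hc
  push_neg at hc
  have hg'0 : g' 0 = 0 := by
    have h := hmax.deriv_eq_zero
    rwa [h1.self_of_nhds.deriv] at h
  have hslope : Filter.Tendsto (slope g' 0) (nhdsWithin 0 {0}ᶜ) (nhds c) :=
    hasDerivAt_iff_tendsto_slope.1 h2
  have hpos : ∀ᶠ t in nhdsWithin (0:ℝ) {0}ᶜ, 0 < slope g' 0 t :=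
    hslope.eventually (eventually_gt_nhds hc)
  have hall : ∀ᶠ t in nhds (0:ℝ),
      t ≠ 0 → (HasDerivAt g (g' t) t ∧ g t ≤ g 0 ∧ 0 < slope g' 0 t) := by
    have hpos' := eventually_nhdsWithin_iff.mp hpos
    filter_upwards [h1, hmax, hpos'] with t h1t hmt hpt ht
    exact ⟨h1t, hmt, hpt ht⟩
  rw [Metric.eventually_nhds_iff] at hall
  obtain ⟨ε, hε, hb⟩ := hall
  set b := ε / 2 with hbdef
  have hb0 : 0 < b := by positivity
  have hbε : ∀ t : ℝ, 0 ≤ t → t ≤ b → dist t 0 < ε := by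
    intro t ht0 htb
    rw [Real.dist_eq, sub_zero, abs_of_nonneg ht0]
    have : b < ε := by rw [hbdef]; linarith
    linarith
  have key : ∀ t ∈ Set.Icc (0:ℝ) b, HasDerivAt g (g' t) t := by
    intro t ht
    rcases eq_or_ne t 0 with rfl | htne
    · exact h1.self_of_nhds
    · exact (hb (hbε t ht.1 ht.2) htne).1
  have hmono : StrictMonoOn g (Set.Icc 0 b) := by
    apply strictMonoOn_of_deriv_pos (convex_Icc 0 b)
    · intro t ht
      exact (key t ht).continuousAt.continuousWithinAt
    · intro t ht
      rw [interior_Icc] at ht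
      obtain ⟨hd, _, hs⟩ := hb (hbε t ht.1.le ht.2.le) (ne_of_gt ht.1)
      rw [hd.deriv]
      rw [slope_def_field, hg'0, sub_zero, sub_zero] at hs
      have := mul_pos hs ht.1
      rwa [div_mul_cancel₀ _ (ne_of_gt ht.1)] at this
  have h1lt : g 0 < g b :=
    hmono ⟨le_refl 0, hb0.le⟩ ⟨hb0.le, le_refl b⟩ hb0
  have h2le : g b ≤ g 0 := (hb (hbε b hb0.le le_rfl) (ne_of_gt hb0)).2.1
  linarith

private lemma dir_second_nonpos {n : ℕ} {U : Set (EuclideanSpace ℝ (Fin n))}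
    (hU : IsOpen U) {f : EuclideanSpace ℝ (Fin n) → ℝ}
    (hf : ContDiffOn ℝ 2 f U) {x₀ : EuclideanSpace ℝ (Fin n)} (hx : x₀ ∈ U)
    (hmax : IsMaxOn f U x₀) (v : EuclideanSpace ℝ (Fin n)) :
    fderiv ℝ (fderiv ℝ f) x₀ v v ≤ 0 := by
  set L : ℝ → EuclideanSpace ℝ (Fin n) := fun t => x₀ + t • v with hL
  have hL0 : L 0 = x₀ := by simp [hL]
  have hLd : ∀ t : ℝ, HasDerivAt L v t := by
    intro t
    simpa [hL] using ((hasDerivAt_id t).smul_const v).const_add x₀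
  have hLU : ∀ᶠ t in nhds (0:ℝ), L t ∈ U := by
    have hc : ContinuousAt L 0 := (hLd 0).continuousAt
    exact hc.eventually_mem (by rw [hL0]; exact hU.mem_nhds hx)
  have h1 : ∀ᶠ t in nhds (0:ℝ), HasDerivAt (fun s => f (L s)) (fderiv ℝ f (L t) v) t := by
    filter_upwards [hLU] with t htU
    have hfd : DifferentiableAt ℝ f (L t) :=
      (hf.differentiableOn (by norm_num)).differentiableAt (hU.mem_nhds htU)
    exact hfd.hasFDerivAt.comp_hasDerivAt t (hLd t)
  have hdf : ContDiffOn ℝ 1 (fderiv ℝ f) U := by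
    have := hf.fderiv_of_isOpen hU (m := 1) (by norm_num)
    exact this
  have hdfd : DifferentiableAt ℝ (fderiv ℝ f) x₀ :=
    (hdf.differentiableOn one_ne_zero).differentiableAt (hU.mem_nhds hx)
  have hF : HasFDerivAt (fderiv ℝ f) (fderiv ℝ (fderiv ℝ f) x₀) (L 0) := by
    rw [hL0]; exact hdfd.hasFDerivAt
  have hcomp : HasDerivAt (fun t => fderiv ℝ f (L t)) (fderiv ℝ (fderiv ℝ f) x₀ v) 0 :=
    hF.comp_hasDerivAt 0 (hLd 0)
  have h2 : HasDerivAt (fun t => fderiv ℝ f (L t) v) (fderiv ℝ (fderiv ℝ f) x₀ v v) 0 := by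
    simpa using hcomp.clm_apply (hasDerivAt_const 0 v)
  have hmaxg : IsLocalMax (fun s => f (L s)) 0 := by
    filter_upwards [hLU] with t htU
    simpa [hL0] using hmax htU
  exact second_deriv_nonpos (g' := fun t => fderiv ℝ f (L t) v) h1 h2 hmaxg




/-- The Euclidean Laplacian of `u : ℝⁿ → ℝ`. -/
noncomputable def lap {n : ℕ} (u : EuclideanSpace ℝ (Fin n) → ℝ)
    (x : EuclideanSpace ℝ (Fin n)) : ℝ :=
  ∑ i : Fin n,
    iteratedFDeriv ℝ 2 u x ![EuclideanSpace.single i 1, EuclideanSpace.single i 1]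

private lemma lap_eq_sum {n : ℕ} (f : EuclideanSpace ℝ (Fin n) → ℝ)
    (x : EuclideanSpace ℝ (Fin n)) :
    lap f x = ∑ i : Fin n,
      fderiv ℝ (fderiv ℝ f) x (EuclideanSpace.single i 1) (EuclideanSpace.single i 1) := by
  simp [lap, iteratedFDeriv_two_apply]


/-- Auxiliary-function maximum principle: with `v = w²` and `Q = ρ²v + C·u`,
if `Q` attains its maximum over `closure U` at `x₀`, then either `ρ(x₀) = 0` and
`Q ≤ C·u(x₀) ≤ C`, or `x₀ ∈ U` and `G(x₀) ≤ C`, whence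
`Q ≤ Q(x₀) ≤ v(x₀) + C·u(x₀)`. -/
theorem auxiliary_maximum_principle {n : ℕ}
    (U : Set (EuclideanSpace ℝ (Fin n))) (hUopen : IsOpen U)
    (hUbdd : Bornology.IsBounded U)
    (ρ u w G : EuclideanSpace ℝ (Fin n) → ℝ) (B C : ℝ) (hC : 1 ≤ C)
    (hρ : ContDiff ℝ (⊤ : ℕ∞) ρ) (hρsupp : HasCompactSupport ρ)
    (hρU : tsupport ρ ⊆ U)
    (hρ01 : ∀ x, 0 ≤ ρ x ∧ ρ x ≤ 1)
    (hρB : ∀ x ∈ U, ‖gradient ρ x‖ ^ 2 + |lap ρ x| ≤ B)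
    (hu : ContinuousOn u (closure U)) (hu2 : ContDiffOn ℝ 2 u U)
    (hw : ContinuousOn w (closure U)) (hw2 : ContDiffOn ℝ 2 w U)
    (hw01 : ∀ x ∈ closure U, 0 ≤ w x ∧ w x ≤ 1)
    (hu01 : ∀ x ∈ closure U, 0 ≤ u x ∧ u x ≤ 1)
    (hG : ContinuousOn G U) (hGpos : ∀ x ∈ U, 0 ≤ G x)
    (hineq_u : ∀ x ∈ U, -lap u x ≤ -2 * G x + 1)
    (hineq_v : ∀ x ∈ U, -lap (fun y => (ρ y) ^ 2 * (w y) ^ 2) x ≤ C * G x)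
    (x₀ : EuclideanSpace ℝ (Fin n)) (hx₀ : x₀ ∈ closure U)
    (hmax : IsMaxOn (fun x => (ρ x) ^ 2 * (w x) ^ 2 + C * u x) (closure U) x₀) :
    (ρ x₀ = 0 ∧
      (∀ x ∈ closure U, (ρ x) ^ 2 * (w x) ^ 2 + C * u x ≤ C * u x₀) ∧
      C * u x₀ ≤ C) ∨
    (x₀ ∈ U ∧ G x₀ ≤ C ∧
      ∀ x ∈ closure U,
        (ρ x) ^ 2 * (w x) ^ 2 + C * u x ≤ (w x₀) ^ 2 + C * u x₀) := by

  rcases eq_or_ne (ρ x₀) 0 with hρ0 | hρ0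
  · left
    refine ⟨hρ0, ?_, ?_⟩
    · intro x hx
      have h := hmax hx
      simpa [hρ0] using h
    · have h1 := (hu01 x₀ hx₀).2
      nlinarith
  · right
    have hx₀U : x₀ ∈ U := hρU (subset_tsupport ρ hρ0)
    have hmaxle : ∀ x ∈ closure U, (ρ x) ^ 2 * (w x) ^ 2 + C * u x
        ≤ (ρ x₀) ^ 2 * (w x₀) ^ 2 + C * u x₀ := fun x hx => hmax hx
    set V : EuclideanSpace ℝ (Fin n) → ℝ := fun y => (ρ y) ^ 2 * (w y) ^ 2 with hV
    set Q : EuclideanSpace ℝ (Fin n) → ℝ := fun x => V x + C * u x with hQ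
    have hρ2 : ContDiffOn ℝ 2 ρ U := (hρ.of_le (by exact WithTop.coe_le_coe.mpr (le_top : (2:ℕ∞) ≤ ⊤))).contDiffOn
    have hVc : ContDiffOn ℝ 2 V U := (hρ2.pow 2).mul (hw2.pow 2)
    have hQc : ContDiffOn ℝ 2 Q U := hVc.add (contDiffOn_const.mul hu2)
    have hev : fderiv ℝ Q =ᶠ[nhds x₀] fun y => fderiv ℝ V y + C • fderiv ℝ u y := by
      filter_upwards [hUopen.mem_nhds hx₀U] with y hy
      have hVd : DifferentiableAt ℝ V y :=
        (hVc.differentiableOn (by norm_num)).differentiableAt (hUopen.mem_nhds hy)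
      have hud : DifferentiableAt ℝ u y :=
        (hu2.differentiableOn (by norm_num)).differentiableAt (hUopen.mem_nhds hy)
      have hQeq : Q = fun x => V x + C • u x := by
        funext x; simp [hQ, smul_eq_mul]
      rw [hQeq, fderiv_fun_add (g := fun y => C • u y) hVd (hud.const_smul C), fderiv_fun_const_smul hud C]
    have hVd2 : DifferentiableAt ℝ (fderiv ℝ V) x₀ :=
      (((hVc.fderiv_of_isOpen hUopen (m := 1) (by norm_num)).differentiableOn
        one_ne_zero)).differentiableAt (hUopen.mem_nhds hx₀U)
    have hud2 : DifferentiableAt ℝ (fderiv ℝ u) x₀ :=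
      (((hu2.fderiv_of_isOpen hUopen (m := 1) (by norm_num)).differentiableOn
        one_ne_zero)).differentiableAt (hUopen.mem_nhds hx₀U)
    have hD2 : fderiv ℝ (fderiv ℝ Q) x₀
        = fderiv ℝ (fderiv ℝ V) x₀ + C • fderiv ℝ (fderiv ℝ u) x₀ := by
      rw [hev.fderiv_eq, fderiv_fun_add (g := fun y => C • fderiv ℝ u y) hVd2 (hud2.const_smul C), fderiv_fun_const_smul hud2 C]
    have hlapQ : lap Q x₀ = lap V x₀ + C * lap u x₀ := by
      simp only [lap_eq_sum, hD2, ContinuousLinearMap.add_apply,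
        ContinuousLinearMap.coe_smul', Pi.smul_apply, ContinuousLinearMap.smul_apply,
        smul_eq_mul]
      rw [Finset.sum_add_distrib, Finset.mul_sum]
    have hmaxU : IsMaxOn Q U x₀ := fun x hx => hmax (subset_closure hx)
    have hQnonpos : lap Q x₀ ≤ 0 := by
      rw [lap_eq_sum]
      exact Finset.sum_nonpos fun i _ =>
        dir_second_nonpos hUopen hQc hx₀U hmaxU _
    have hC0 : (0:ℝ) < C := lt_of_lt_of_le one_pos hC
    have hGle : G x₀ ≤ C := by
      have hv := hineq_v x₀ hx₀U
      have hu' := hineq_u x₀ hx₀U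
      have humul : C * (-lap u x₀) ≤ C * (-2 * G x₀ + 1) :=
        mul_le_mul_of_nonneg_left hu' hC0.le
      have hG1 : G x₀ ≤ 1 := by nlinarith [hlapQ, hQnonpos]
      linarith
    refine ⟨hx₀U, hGle, ?_⟩
    intro x hx
    have h := hmaxle x hx
    have hρle : (ρ x₀) ^ 2 ≤ 1 := by
      have h1 := (hρ01 x₀).1
      have h2 := (hρ01 x₀).2
      nlinarith
    have hwle : 0 ≤ (w x₀) ^ 2 := sq_nonneg _
    have hkey : (ρ x₀) ^ 2 * (w x₀) ^ 2 ≤ (w x₀) ^ 2 :=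
      mul_le_of_le_one_left hwle hρle
    linarith only [h, hkey]
end
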